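/- arXiv:1805.09690 — 6 statements merged into one kernel-verified Lean document; each statement's English description precedes it below -/
import Mathlib

section
/- Let H be a countable Abelian group. Then H can be represented in the form H = N × M, where M is a free Abelian group and N is a subgroup that has no free factor-groups (i.e., admits no nontrivial free quotient group). Moreover, the subgroup N is uniquely determined by H. -/
/-- An abelian group `N` has no (nontrivial) free factor-groups: every quotient of `N`
which is a free abelian group (i.e. a free `ℤ`-module) is trivial. -/
def HasNoFreeQuotient (N : Type) [AddCommGroup N] : Prop :=
  ∀ K : AddSubgroup N, Module.Free ℤ (N ⧸ K) → Subsingleton (N ⧸ K)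

/-!
Let `N` be the subgroup of elements killed by every homomorphism to `ℤ`. Then `H ⧸ N` is
countable and its points are separated by homomorphisms to `ℤ`, so it is free: enumerating it,
the pure closures `Aₙ` of the subgroups generated by the first `n` elements are finitely
generated (finitely many functionals already separate them), and the successive quotients
`Aₙ₊₁ ⧸ Aₙ` are finitely generated and torsion-free, hence free; so `H ⧸ N` is the direct sum
of complements of `Aₙ` in `Aₙ₊₁`. Splitting `H → H ⧸ N` gives `H = N ⊕ F` with `F` free, and a
homomorphism `N → ℤ` extends to `H` through the projection, hence vanishes: `N` has no free
quotients. Conversely, given `H = N' ⊕ M'` of the same kind, every homomorphism `H → ℤ` vanishes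
on `N'` (its image would be a free quotient of `N'`), while the coordinate functionals of the
free summand `M'` separate its points; so `N' = N`.
-/

open Module LinearMap

section Ring

variable {R M : Type*} [Ring R] [AddCommGroup M] [Module R M]

theorem LinearMap.exists_isCompl_ker_of_surjective {P : Type*} [AddCommGroup P] [Module R P]
    [Projective R P] (f : M →ₗ[R] P) (hf : Function.Surjective f) :
    ∃ C : Submodule R M, IsCompl (ker f) C ∧ Nonempty (C ≃ₗ[R] P) := by
  obtain ⟨s, hs⟩ := f.exists_rightInverse_of_surjective (range_eq_top.mpr hf)
  have hfs (y : P) : f (s y) = y := LinearMap.congr_fun hs y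
  refine ⟨range s, ⟨?_, ?_⟩,
    ⟨(LinearEquiv.ofInjective s (Function.LeftInverse.injective hfs)).symm⟩⟩
  · rw [Submodule.disjoint_def]
    rintro _ hx ⟨y, rfl⟩
    rw [mem_ker, hfs] at hx
    rw [hx, map_zero]
  · rw [codisjoint_iff, eq_top_iff]
    intro x _
    have hx : x - s (f x) ∈ ker f := by simp [hfs]
    exact Submodule.mem_sup.mpr ⟨_, hx, _, mem_range_self s (f x), sub_add_cancel x _⟩

theorem Module.Free.of_disjoint_sup_eq_succ {A C : ℕ → Submodule R M} (h0 : A 0 = ⊥)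
    (htop : ⨆ n, A n = ⊤) (hdisj : ∀ n, Disjoint (A n) (C n))
    (hsup : ∀ n, A n ⊔ C n = A (n + 1)) (hC : ∀ n, Free R (C n)) : Free R M := by
  have hpartial (n : ℕ) : (Finset.range n).sup C = A n := by
    induction n with
    | zero => simp [h0]
    | succ n ih => rw [Finset.range_add_one, Finset.sup_insert, ih, sup_comm, hsup]
  have hindep : iSupIndep C := by
    have hrange (n : ℕ) : (Finset.range n).SupIndep C := by
      induction n with
      | zero => simp
      | succ n ih => rw [Finset.range_add_one]; exact ih.insert (hpartial n ▸ (hdisj n).symm)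
    refine iSupIndep_iff_supIndep.mpr fun s => ?_
    obtain ⟨n, hn⟩ := s.exists_nat_subset_range
    exact (hrange n).subset hn
  have hiSup : ⨆ n, C n = ⊤ := by
    refine eq_top_iff.mpr (htop ▸ iSup_le fun n => ?_)
    exact hpartial n ▸ Finset.sup_le fun m _ => le_iSup C m
  classical
  exact .of_basis <| ((DirectSum.isInternal_submodule_iff_iSupIndep_and_iSup_eq_top C).mpr
    ⟨hindep, hiSup⟩).collectedBasis fun n => (hC n).chooseBasis

end Ring

namespace Submodule

variable {R M : Type*} [CommRing R] [IsDomain R] [AddCommGroup M] [Module R M]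

def pureClosure (S : Submodule R M) : Submodule R M where
  carrier := {x | ∃ r : R, r ≠ 0 ∧ r • x ∈ S}
  zero_mem' := ⟨1, one_ne_zero, by simp⟩
  add_mem' := by
    rintro x y ⟨r, hr, hrx⟩ ⟨s, hs, hsy⟩
    refine ⟨r * s, mul_ne_zero hr hs, ?_⟩
    rw [smul_add, mul_comm r s, mul_smul, mul_comm s r, mul_smul]
    exact S.add_mem (S.smul_mem s hrx) (S.smul_mem r hsy)
  smul_mem' := by
    rintro c x ⟨r, hr, hrx⟩
    exact ⟨r, hr, by rw [smul_comm]; exact S.smul_mem c hrx⟩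

theorem le_pureClosure (S : Submodule R M) : S ≤ S.pureClosure :=
  fun x hx => ⟨1, one_ne_zero, by simpa using hx⟩

theorem pureClosure_mono {S T : Submodule R M} (h : S ≤ T) : S.pureClosure ≤ T.pureClosure :=
  fun _ ⟨r, hr, hrx⟩ => ⟨r, hr, h hrx⟩

theorem pureClosure_bot [IsTorsionFree R M] : (⊥ : Submodule R M).pureClosure = ⊥ :=
  eq_bot_iff.mpr fun _ ⟨_, hr, hrx⟩ => (smul_eq_zero_iff_right hr).mp hrx

instance isTorsionFree_quotient_pureClosure (S : Submodule R M) :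
    IsTorsionFree R (M ⧸ S.pureClosure) := by
  refine .of_smul_eq_zero fun r q hrq => or_iff_not_imp_left.mpr fun hr => ?_
  obtain ⟨x, rfl⟩ := S.pureClosure.mkQ_surjective q
  rw [← map_smul, mkQ_apply, Quotient.mk_eq_zero] at hrq
  rw [mkQ_apply, Quotient.mk_eq_zero]
  obtain ⟨s, hs, hsrx⟩ := hrq
  exact ⟨s * r, mul_ne_zero hs hr, by rwa [mul_smul]⟩

end Submodule

namespace Module

variable {R M : Type*} [CommRing R] [AddCommGroup M] [Module R M]

theorem mem_ker_dualEval {x : M} : x ∈ ker (Dual.eval R M) ↔ ∀ φ : Dual R M, φ x = 0 := by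
  simp [LinearMap.ext_iff]

theorem isTorsionFree_of_injective_dualEval (hsep : Function.Injective (Dual.eval R M)) :
    IsTorsionFree R M :=
  hsep.moduleIsTorsionFree _ (map_smul _)

theorem exists_finset_dual_forall_apply_eq_zero [IsNoetherianRing R] {S : Submodule R M}
    (hS : S.FG) : ∃ s : Finset (Dual R M),
      ∀ x ∈ S, (∀ φ ∈ s, φ x = 0) → ∀ ψ : Dual R M, ψ x = 0 := by
  have : Module.Finite R S := Module.Finite.iff_fg.mpr hS
  -- `Dual R S` is a noetherian module, so the restrictions to `S` of finitely many
  -- functionals span the restrictions of all of them.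
  let restrict := S.subtype.dualMap
  obtain ⟨t, ht, hspan⟩ := (Submodule.fg_span_iff_fg_span_finset_subset (Set.range restrict)).mp
    (by rw [← coe_range, Submodule.span_eq]; exact IsNoetherian.noetherian _)
  classical
  obtain ⟨s, -, rfl⟩ := Finset.subset_set_image_iff.mp (Set.image_univ ▸ ht)
  refine ⟨s, fun x hx hs ψ => ?_⟩
  have hle : Submodule.span R (Set.range restrict) ≤ ker (Dual.eval R S ⟨x, hx⟩) := by
    rw [hspan, Submodule.span_le]
    intro _ hφ
    obtain ⟨φ, hφs, rfl⟩ := Finset.mem_image.mp hφ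
    exact hs φ hφs
  exact hle (Submodule.subset_span ⟨ψ, rfl⟩)

theorem injective_dualEval_quotient_ker_dualEval :
    Function.Injective (Dual.eval R (M ⧸ ker (Dual.eval R M))) := by
  refine (injective_iff_map_eq_zero _).mpr fun q hq => ?_
  obtain ⟨x, rfl⟩ := Submodule.mkQ_surjective _ q
  rw [Submodule.mkQ_apply, Submodule.Quotient.mk_eq_zero, mem_ker_dualEval]
  intro φ
  have hφ : ker (Dual.eval R M) ≤ ker φ := fun y hy => mem_ker_dualEval.mp hy φ
  simpa using mem_ker_dualEval.mp (mem_ker.mpr hq) ((ker _).liftQ φ hφ)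

theorem dual_eq_zero_of_isCompl_ker_dualEval {F : Submodule R M}
    (h : IsCompl (ker (Dual.eval R M)) F) (φ : Dual R (ker (Dual.eval R M))) : φ = 0 := by
  ext ⟨x, hx⟩
  have := mem_ker_dualEval.mp hx (φ ∘ₗ Submodule.projectionOnto _ _ h)
  rwa [comp_apply, Submodule.projectionOnto_apply_left h ⟨x, hx⟩] at this

theorem ker_dualEval_le_of_isCompl {P F : Submodule R M} (h : IsCompl P F) [Projective R F] :
    ker (Dual.eval R M) ≤ P := by
  intro x hx
  rw [← Submodule.ker_projectionOnto h.symm, mem_ker, ← forall_dual_apply_eq_zero_iff R]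
  exact fun φ => mem_ker_dualEval.mp hx (φ ∘ₗ Submodule.projectionOnto F P h.symm)

end Module

section PID

variable {R M : Type*} [CommRing R] [IsDomain R] [IsPrincipalIdealRing R]
  [AddCommGroup M] [Module R M]

theorem Submodule.finite_pureClosure (hsep : Function.Injective (Dual.eval R M))
    {S : Submodule R M} (hS : S.FG) : Module.Finite R S.pureClosure := by
  have := isTorsionFree_of_injective_dualEval hsep
  obtain ⟨s, hs⟩ := exists_finset_dual_forall_apply_eq_zero hS
  let ev : S.pureClosure →ₗ[R] (s → R) := LinearMap.pi fun φ => φ.1 ∘ₗ S.pureClosure.subtype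
  refine .of_injective ev ((injective_iff_map_eq_zero ev).mpr fun ⟨x, r, hr, hrx⟩ hx => ?_)
  have hrx0 : r • x = 0 := by
    refine (injective_iff_map_eq_zero _).mp hsep _ (LinearMap.ext fun ψ => ?_)
    refine hs _ hrx (fun φ hφ => ?_) ψ
    rw [map_smul, smul_eq_zero]
    exact .inr (congr_fun hx ⟨φ, hφ⟩)
  exact Subtype.ext ((smul_eq_zero_iff_right hr).mp hrx0)

theorem Submodule.exists_free_disjoint_sup_eq {p q : Submodule R M} (hpq : p ≤ q)
    [Module.Finite R q] [IsTorsionFree R (M ⧸ p)] :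
    ∃ C : Submodule R M, Disjoint p C ∧ p ⊔ C = q ∧ Free R C := by
  let f := p.mkQ ∘ₗ q.subtype
  obtain ⟨C, hC, ⟨e⟩⟩ :=
    f.rangeRestrict.exists_isCompl_ker_of_surjective f.surjective_rangeRestrict
  have hker : ker f.rangeRestrict = p.comap q.subtype := by simp [f, ker_comp]
  rw [hker] at hC
  have hmap : map q.subtype (p.comap q.subtype) = p := by
    rw [map_comap_subtype, inf_eq_right.mpr hpq]
  have : Free R C := .of_equiv e.symm
  refine ⟨C.map q.subtype, hmap ▸ disjoint_map q.injective_subtype hC.disjoint, ?_,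
    .of_equiv (C.equivMapOfInjective _ q.injective_subtype)⟩
  rw [← hmap, ← map_sup, hC.sup_eq_top, map_subtype_top]

open Submodule in
theorem Module.free_of_countable_of_injective_dualEval [Countable M]
    (hsep : Function.Injective (Dual.eval R M)) : Free R M := by
  have := isTorsionFree_of_injective_dualEval hsep
  obtain ⟨e, he⟩ := exists_surjective_nat M
  let A (n : ℕ) := (span R (e '' Set.Iio n)).pureClosure
  have hmono (n : ℕ) : A n ≤ A (n + 1) :=
    pureClosure_mono (span_mono (Set.image_mono (Set.Iio_subset_Iio n.le_succ)))
  have hstep (n : ℕ) : ∃ C, Disjoint (A n) C ∧ A n ⊔ C = A (n + 1) ∧ Free R C := by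
    have := finite_pureClosure hsep (fg_span ((Set.finite_Iio (n + 1)).image e))
    exact exists_free_disjoint_sup_eq (hmono n)
  choose C hdisj hsup hC using hstep
  refine .of_disjoint_sup_eq_succ (A := A) ?_ ?_ hdisj hsup hC
  · simp [A, pureClosure_bot]
  · refine eq_top_iff.mpr fun x _ => ?_
    obtain ⟨n, rfl⟩ := he x
    exact mem_iSup_of_mem (n + 1) (le_pureClosure _ (subset_span ⟨n, n.lt_succ_self, rfl⟩))

theorem Module.exists_free_isCompl_ker_dualEval [Countable M] :
    ∃ F : Submodule R M, IsCompl (ker (Dual.eval R M)) F ∧ Free R F := by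
  have : Countable (M ⧸ ker (Dual.eval R M)) := (Submodule.mkQ_surjective _).countable
  have := free_of_countable_of_injective_dualEval
    (injective_dualEval_quotient_ker_dualEval (R := R) (M := M))
  obtain ⟨F, hF, ⟨e⟩⟩ :=
    (ker (Dual.eval R M)).mkQ.exists_isCompl_ker_of_surjective (Submodule.mkQ_surjective _)
  rw [Submodule.ker_mkQ] at hF
  exact ⟨F, hF, .of_equiv e.symm⟩

end PID

theorem hasNoFreeQuotient_iff_forall_eq_zero {X : Type} [AddCommGroup X] :
    HasNoFreeQuotient X ↔ ∀ φ : X →+ ℤ, φ = 0 := by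
  constructor
  · intro h φ
    have : Free ℤ φ.range := (inferInstance : Free ℤ (AddSubgroup.toIntSubmodule φ.range))
    have := h φ.ker (.of_equiv (QuotientAddGroup.quotientKerEquivRange φ).symm.toIntLinearEquiv)
    ext x
    exact (QuotientAddGroup.eq_zero_iff (N := φ.ker) x).mp (Subsingleton.elim _ 0)
  · intro h K _
    by_contra hnt
    rw [not_subsingleton_iff_nontrivial] at hnt
    obtain ⟨q, hq⟩ := exists_ne (0 : X ⧸ K)
    obtain ⟨f, hf⟩ := Projective.exists_dual_ne_zero ℤ hq
    obtain ⟨x, rfl⟩ := QuotientAddGroup.mk_surjective q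
    exact hf (DFunLike.congr_fun (h (f.toAddMonoidHom.comp (QuotientAddGroup.mk' K))) x)

/-- **K. Stein's theorem (Lemma 2).**  Every countable abelian group `H` is represented
in the form `H = N × M` (an internal direct sum of subgroups), where `M` is free and `N`
has no free factor-groups; the subgroup `N` is uniquely determined by `H`. -/
theorem stein_decomposition (H : Type) [AddCommGroup H] [Countable H] :
    ∃ N M : AddSubgroup H,
      IsCompl N M ∧ Module.Free ℤ M ∧ HasNoFreeQuotient N ∧
      ∀ N' M' : AddSubgroup H,
        IsCompl N' M' → Module.Free ℤ M' → HasNoFreeQuotient N' → N' = N := by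
  obtain ⟨F, hF, hFfree⟩ := exists_free_isCompl_ker_dualEval (R := ℤ) (M := H)
  refine ⟨(ker (Dual.eval ℤ H)).toAddSubgroup, F.toAddSubgroup,
    AddSubgroup.toIntSubmodule.symm.isCompl hF, hFfree, ?_, fun N' M' hc hM' hN' => ?_⟩
  · refine hasNoFreeQuotient_iff_forall_eq_zero.mpr fun φ => AddMonoidHom.ext fun x => ?_
    exact LinearMap.congr_fun (dual_eq_zero_of_isCompl_ker_dualEval hF φ.toIntLinearMap) x
  refine le_antisymm (fun x hx => mem_ker_dualEval.mpr fun ψ => ?_) ?_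
  · exact DFunLike.congr_fun
      (hasNoFreeQuotient_iff_forall_eq_zero.mp hN' (ψ.toAddMonoidHom.comp N'.subtype)) ⟨x, hx⟩
  · have : Free ℤ (AddSubgroup.toIntSubmodule M') := hM'
    exact ker_dualEval_le_of_isCompl (AddSubgroup.toIntSubmodule.isCompl hc)
end

section
/- Let X be a topological Abelian group, B a Borel subgroup of X, and μ a distribution on X concentrated on B. If μ = μ_1 * μ_2, where μ_1, μ_2 are distributions on X, then the distributions μ_j can be replaced by their shifts μ'_j (i.e., μ'_j = μ_j * E_{x_j} for some x_j ∈ X) in such a manner that μ = μ'_1 * μ'_2 and both μ'_j are concentrated on B. -/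
/-!
Since `μ₁ ∗ μ₂` is concentrated on `B`, Fubini gives `x + y ∈ B` for `μ₁`-a.e. `x` and `μ₂`-a.e.
`y`, in either order of quantifiers. Pick `c` with `x + c ∈ B` for `μ₁`-a.e. `x`, and then `x₀`
with `x₀ + c ∈ B` and `x₀ + y ∈ B` for `μ₂`-a.e. `y`; as `B` is a subgroup, `y - c ∈ B` for
`μ₂`-a.e. `y`. Shifting `μ₁` by `c` and `μ₂` by `-c` leaves the convolution unchanged.

Without second countability, addition need not be measurable on `X × X` for the product
σ-algebra, and `Measure.map` of a non-a.e.-measurable function is `0`; so even `μ ∗ dirac x`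
needs an argument: a.e.-measurability of addition on `X × closure {x}`.
-/

open MeasureTheory Measure Set

theorem MeasureTheory.Measure.map_map_of_measurableEquiv {α β γ : Type*} [MeasurableSpace α]
    [MeasurableSpace β] [MeasurableSpace γ] (e : α ≃ᵐ β) (f : β → γ) (μ : Measure α) :
    (μ.map e).map f = μ.map (f ∘ e) := by
  by_cases hf : AEMeasurable f (μ.map e)
  · exact hf.map_map_of_aemeasurable e.measurable.aemeasurable
  · rw [map_of_not_aemeasurable hf,
      map_of_not_aemeasurable ((aemeasurable_map_equiv_iff e).not.1 hf)]

section Topological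

variable {X : Type*} [TopologicalSpace X] [AddCommGroup X] [IsTopologicalAddGroup X]
  [MeasurableSpace X] [BorelSpace X]

/-- On `X × closure {x}`, addition agrees with `p ↦ p.1 + x` up to inseparability, which Borel
sets cannot detect. -/
theorem aemeasurable_add_map_prodMk_right (μ : Measure X) (x : X) :
    AEMeasurable (fun p : X × X => p.1 + p.2) (μ.map (·, x)) := by
  set S : Set (X × X) := univ ×ˢ closure {x}
  have hS : MeasurableSet S := MeasurableSet.univ.prod isClosed_closure.measurableSet
  have hfull : ∀ᵐ p ∂μ.map (·, x), p ∈ S :=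
    (ae_map_iff (by fun_prop) hS).2 (.of_forall fun _ => ⟨trivial, subset_closure rfl⟩)
  rw [← restrict_eq_self_of_ae_mem hfull]
  refine aemeasurable_restrict_of_measurable_subtype hS fun B hB => ?_
  convert (measurable_subtype_coe.fst.add_const x) hB using 1
  ext ⟨p, -, hp⟩
  exact ((Inseparable.refl p.1).add
    (specializes_iff_mem_closure.2 hp).symm.inseparable).mem_measurableSet_iff hB

theorem conv_dirac_eq_map_add_right (μ : Measure X) [SFinite μ] (x : X) :
    μ ∗ dirac x = μ.map (· + x) := by
  rw [conv, prod_dirac, (aemeasurable_add_map_prodMk_right μ x).map_map_of_aemeasurable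
    (by fun_prop)]
  rfl

theorem conv_dirac_conv_conv_dirac_neg (μ ν : Measure X) [SFinite μ] [SFinite ν] (c : X) :
    (μ ∗ dirac c) ∗ (ν ∗ dirac (-c)) = μ ∗ ν := by
  let E : (X × X) ≃ᵐ (X × X) := (Homeomorph.addRight c).toMeasurableEquiv.prodCongr
    (Homeomorph.addRight (-c)).toMeasurableEquiv
  calc (μ ∗ dirac c) ∗ (ν ∗ dirac (-c))
      = ((μ.prod ν).map E).map (fun p => p.1 + p.2) := by
        rw [conv_dirac_eq_map_add_right, conv_dirac_eq_map_add_right, conv,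
          map_prod_map _ _ (by fun_prop) (by fun_prop)]
        rfl
    _ = μ ∗ ν := by
        rw [map_map_of_measurableEquiv]
        congr 1
        funext p
        change p.1 + c + (p.2 + -c) = p.1 + p.2
        abel

theorem conv_dirac_apply_eq_one {μ : Measure X} [IsProbabilityMeasure μ] {B : Set X}
    (hB : MeasurableSet B) {c : X} (h : ∀ᵐ x ∂μ, x + c ∈ B) : (μ ∗ dirac c) B = 1 := by
  rw [conv_dirac_eq_map_add_right, map_apply (measurable_add_const c) hB,
    ← prob_compl_eq_zero_iff (measurable_add_const c hB)]
  exact h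

end Topological

section

variable {X : Type*} [AddCommGroup X] [MeasurableSpace X]

theorem ae_prod_add_mem_of_conv_apply_eq_one {μ ν : Measure X} [IsProbabilityMeasure (μ ∗ ν)]
    {B : Set X} (hB : MeasurableSet B) (h : (μ ∗ ν) B = 1) :
    ∀ᵐ p ∂μ.prod ν, p.1 + p.2 ∈ B := by
  have hae : ∀ᵐ z ∂(μ ∗ ν), z ∈ B :=
    (ae_mem_iff_measure_eq hB.nullMeasurableSet).2 (by rw [h, measure_univ])
  exact ae_of_ae_map (AEMeasurable.of_map_ne_zero (IsProbabilityMeasure.ne_zero (μ ∗ ν))) hae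

theorem AddSubgroup.exists_ae_add_mem_and_ae_add_neg_mem {μ ν : Measure X} [NeZero μ] [NeZero ν]
    (B : AddSubgroup X) (hμν : ∀ᵐ x ∂μ, ∀ᵐ y ∂ν, x + y ∈ B)
    (hνμ : ∀ᵐ y ∂ν, ∀ᵐ x ∂μ, x + y ∈ B) :
    ∃ c, (∀ᵐ x ∂μ, x + c ∈ B) ∧ ∀ᵐ y ∂ν, y + -c ∈ B := by
  obtain ⟨c, hc⟩ := hνμ.exists
  obtain ⟨x₀, hx₀ν, hx₀c⟩ := (hμν.and hc).exists
  refine ⟨c, hc, hx₀ν.mono fun y hy => ?_⟩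
  have := B.sub_mem hy hx₀c
  rwa [add_sub_add_left_eq_sub, sub_eq_add_neg] at this

end

/-- **Lemma 4.**  Let `X` be a topological Abelian group, `B` a Borel subgroup of `X`,
and `μ` a distribution on `X` concentrated on `B`.  If `μ = μ₁ * μ₂` (convolution) for
distributions `μ₁, μ₂` on `X`, then `μ₁, μ₂` can be replaced by shifts
`μ'ⱼ = μⱼ * E_{xⱼ}` so that `μ = μ'₁ * μ'₂` and both `μ'ⱼ` are concentrated on `B`. -/
theorem shift_factors_to_subgroup
    {X : Type} [TopologicalSpace X] [AddCommGroup X] [IsTopologicalAddGroup X]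
    [MeasurableSpace X] [BorelSpace X]
    (B : AddSubgroup X) (hB : MeasurableSet (B : Set X))
    (μ μ₁ μ₂ : Measure X)
    [IsProbabilityMeasure μ] [IsProbabilityMeasure μ₁] [IsProbabilityMeasure μ₂]
    (hμB : μ (B : Set X) = 1)
    (hconv : μ = μ₁ ∗ μ₂) :
    ∃ x₁ x₂ : X,
      μ = (μ₁ ∗ (Measure.dirac x₁)) ∗ (μ₂ ∗ (Measure.dirac x₂)) ∧
      (μ₁ ∗ (Measure.dirac x₁)) (B : Set X) = 1 ∧
      (μ₂ ∗ (Measure.dirac x₂)) (B : Set X) = 1 := by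
  subst hconv
  have h₁₂ := ae_prod_add_mem_of_conv_apply_eq_one hB hμB
  have h₂₁ := (measurePreserving_swap (μ := μ₂) (ν := μ₁)).quasiMeasurePreserving.ae h₁₂
  obtain ⟨c, h₁, h₂⟩ := B.exists_ae_add_mem_and_ae_add_neg_mem
    (ae_ae_of_ae_prod h₁₂) (ae_ae_of_ae_prod h₂₁)
  exact ⟨c, -c, (conv_dirac_conv_conv_dirac_neg μ₁ μ₂ c).symm,
    conv_dirac_apply_eq_one hB h₁, conv_dirac_apply_eq_one hB h₂⟩
end

section
/- Let X and G be complete separable metric Abelian groups, α_j, β_j ∈ Aut(X), j = 1,…,n, n ≥ 2, and let p : G → X be a continuous monomorphism such that α_j(p(G)) = β_j(p(G)) = p(G) for all j. Let ξ_j be independent random variables with values in X with distributions μ_j, and assume there exist elements x_j ∈ X such that all distributions μ_j * E_{x_j} are concentrated on the subgroup p(G). If the linear forms L_1 = α_1ξ_1 + ⋯ + α_nξ_n and L_2 = β_1ξ_1 + ⋯ + β_nξ_n are independent, then ξ̂_j = p^{−1}(ξ_j + x_j) are independent random variables with values in G, the maps α̂_j = p^{−1}α_j p and β̂_j = p^{−1}β_j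 p are topological automorphisms of G, and the linear forms L̂_1 = α̂_1ξ̂_1 + ⋯ + α̂_nξ̂_n and L̂_2 = β̂_1ξ̂_1 + ⋯ + β̂_nξ̂_n are independent. -/
/-! A continuous injection `p` of the Polish group `G` is a Borel isomorphism onto its Borel image
(Lusin–Souslin), so `pInv p` is measurable. The lifts `p⁻¹ ∘ α j ∘ p` are then measurable
homomorphisms of `G`, hence continuous by the Banach–Pettis automatic continuity theorem. Almost
surely every `ξ j + x j` lies in `p(G)`, and there the lifted form `L̂₁` equals
`p⁻¹ (L₁ + ∑ j, α j (x j))` (likewise for `L̂₂`), so `L̂₁, L̂₂` are functions of `L₁, L₂`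
and inherit their independence. -/

open MeasureTheory ProbabilityTheory Topology Filter Set Pointwise

lemma isMeagre_congr {Y : Type*} [TopologicalSpace Y] {s t : Set Y} (h : s =ᵇ t) :
    IsMeagre s ↔ IsMeagre t :=
  eventually_congr (eventuallyEq_set.mp h.compl)

section AutomaticContinuity

variable {G : Type*} [TopologicalSpace G] [AddGroup G] [IsTopologicalAddGroup G]

lemma residualEq_vadd_set {A U : Set G} (h : A =ᵇ U) (g : G) : (g +ᵥ A) =ᵇ (g +ᵥ U) := by
  simp only [← preimage_vadd_neg]
  exact h.comp_tendsto (Homeomorph.addLeft (-g)).residual_map_eq.le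

/-- **Pettis' lemma**. -/
theorem BaireMeasurableSet.sub_self_mem_nhds_zero [BaireSpace G] {A : Set G}
    (hA : BaireMeasurableSet A) (hA' : ¬IsMeagre A) : A - A ∈ 𝓝 (0 : G) := by
  obtain ⟨U, hUo, hAU⟩ := hA.residualEq_isOpen
  obtain ⟨u, hu⟩ : U.Nonempty := nonempty_of_not_isMeagre ((isMeagre_congr hAU).not.mp hA')
  refine mem_of_superset ((hUo.preimage (continuous_add_const u)).mem_nhds (by simpa)) ?_
  intro g (hg : g + u ∈ U)
  have hUg : ¬IsMeagre (U ∩ (g +ᵥ U)) :=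
    not_isMeagre_of_isOpen (hUo.inter (hUo.vadd g)) ⟨g + u, hg, u, hu, rfl⟩
  obtain ⟨a, ha, b, hb, rfl⟩ := nonempty_of_not_isMeagre
    ((isMeagre_congr (hAU.inter (residualEq_vadd_set hAU g))).not.mpr hUg)
  exact ⟨g + b, ha, b, hb, add_sub_cancel_right g b⟩

theorem AddMonoidHom.continuous_of_measurable_of_baireSpace [BaireSpace G]
    [MeasurableSpace G] [BorelSpace G] {H : Type*} [TopologicalSpace H] [AddGroup H]
    [IsTopologicalAddGroup H] [TopologicalSpace.SeparableSpace H] [MeasurableSpace H]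
    [OpensMeasurableSpace H] (f : G →+ H) (hf : Measurable f) : Continuous f := by
  -- Countably many translates of a small neighbourhood cover `H`; by Baire one of their
  -- preimages is nonmeagre, and Pettis' lemma applies to it.
  refine continuous_of_continuousAt_zero f fun V hV => ?_
  rw [map_zero] at hV
  obtain ⟨W, hW, hWV⟩ := exists_nhds_half_neg hV
  obtain ⟨D, hDc, hDd⟩ := TopologicalSpace.exists_countable_dense H
  set A : H → Set G := fun d => f ⁻¹' ((· - d) ⁻¹' interior W)
  have hcover : ⋃ d ∈ D, A d = univ := by
    refine eq_univ_of_forall fun g => mem_iUnion₂.2 ?_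
    obtain ⟨d, hd, hgd⟩ := hDd.exists_mem_open
      (isOpen_interior.preimage (continuous_sub_left (f g)))
      ⟨f g, by simpa using mem_interior_iff_mem_nhds.2 hW⟩
    exact ⟨d, hd, hgd⟩
  obtain ⟨d, -, hd⟩ := exists_of_not_isMeagre_biUnion hDc
    (hcover ▸ not_isMeagre_of_isOpen isOpen_univ univ_nonempty)
  have hAd : MeasurableSet (A d) :=
    hf (isOpen_interior.preimage (continuous_sub_right d)).measurableSet
  refine mem_map.2 <| mem_of_superset ((hAd.baireMeasurableSet).sub_self_mem_nhds_zero hd) ?_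
  rintro _ ⟨a, ha, b, hb, rfl⟩
  simpa [map_sub] using hWV _ (interior_subset ha) _ (interior_subset hb)

/-- By Lusin–Souslin, `q` is a measurable embedding, so `f` is measurable. -/
theorem AddMonoidHom.continuous_of_continuous_comp [BaireSpace G] [MeasurableSpace G]
    [BorelSpace G] {H : Type*} [TopologicalSpace H] [AddGroup H] [IsTopologicalAddGroup H]
    [PolishSpace H] [MeasurableSpace H] [BorelSpace H] {Y : Type*} [TopologicalSpace Y]
    [T2Space Y] [MeasurableSpace Y] [BorelSpace Y] (f : G →+ H) {q : H → Y} (hqc : Continuous q)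
    (hq : Function.Injective q) (hf : Continuous (q ∘ f)) : Continuous f :=
  f.continuous_of_measurable_of_baireSpace <|
    (hqc.measurableEmbedding hq).measurable_comp_iff.1 hf.measurable

end AutomaticContinuity

/-- The (set-theoretic) inverse of an injective homomorphism `p : G → X`, used to pull
random variables taking values in the subgroup `p(G)` back to `G`. -/
noncomputable def pInv {G X : Type} [AddCommGroup G] [AddCommGroup X] (p : G →+ X) :
    X → G :=
  haveI : Nonempty G := ⟨0⟩
  Function.invFun p

section pInv

variable {G X : Type} [AddCommGroup G] [AddCommGroup X] {p : G →+ X}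

lemma pInv_apply_map (hp : Function.Injective p) (g : G) : pInv p (p g) = g :=
  Function.leftInverse_invFun hp g

lemma map_pInv_of_mem_range {y : X} (hy : y ∈ range p) : p (pInv p y) = y :=
  Function.invFun_eq hy

lemma measurable_pInv [MeasurableSpace G] [MeasurableSpace X] (hp : MeasurableEmbedding p) :
    Measurable (pInv p) := by
  have : Nonempty G := ⟨0⟩
  convert hp.measurable_invFun using 1
  funext y
  by_cases hy : y ∈ range p
  · exact hp.injective <| by
      rw [map_pInv_of_mem_range hy]
      obtain ⟨g, rfl⟩ := hy
      rw [hp.leftInverse_invFun g]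
  · rw [pInv, Function.invFun, dif_neg (show ¬∃ g, p g = y from hy), MeasurableEmbedding.invFun,
      dif_neg hy]

end pInv

section Induced

variable {G X : Type*} [AddGroup G] [AddGroup X] {p : G →+ X}

/-- The paper's `p⁻¹ ∘ e ∘ p`, built from the restriction of `e` to `range p`. -/
noncomputable def AddEquiv.inducedOfInjective (hp : Function.Injective p) (e : X ≃+ X)
    (he : e '' range p = range p) : G ≃+ G :=
  let E := AddMonoidHom.ofInjective hp
  E.trans <| (e.addSubgroupMap p.range).trans <|
    (AddEquiv.addSubgroupCongr (SetLike.coe_injective (by simpa using he))).trans E.symm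

variable (hp : Function.Injective p) {e : X ≃+ X} (he : e '' range p = range p)

lemma AddEquiv.map_inducedOfInjective_apply (g : G) :
    p (e.inducedOfInjective hp he g) = e (p g) := by
  simp [AddEquiv.inducedOfInjective, AddMonoidHom.ofInjective_apply]

lemma AddEquiv.map_inducedOfInjective_symm_apply (g : G) :
    p ((e.inducedOfInjective hp he).symm g) = e.symm (p g) :=
  e.injective <| by rw [← map_inducedOfInjective_apply hp he, AddEquiv.apply_symm_apply,
    AddEquiv.apply_symm_apply]

variable [TopologicalSpace G] [IsTopologicalAddGroup G] [PolishSpace G] [MeasurableSpace G]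
  [BorelSpace G] [TopologicalSpace X] [T2Space X] [MeasurableSpace X] [BorelSpace X]

lemma AddEquiv.continuous_inducedOfInjective (hpc : Continuous p) (hec : Continuous e) :
    Continuous (e.inducedOfInjective hp he) :=
  (e.inducedOfInjective hp he).toAddMonoidHom.continuous_of_continuous_comp hpc hp <| by
    simpa [Function.comp_def, map_inducedOfInjective_apply] using hec.comp hpc

lemma AddEquiv.continuous_inducedOfInjective_symm (hpc : Continuous p)
    (hec : Continuous e.symm) :
    Continuous (e.inducedOfInjective hp he).symm :=
  (e.inducedOfInjective hp he).symm.toAddMonoidHom.continuous_of_continuous_comp hpc hp <| by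
    simpa [Function.comp_def, map_inducedOfInjective_symm_apply] using hec.comp hpc

end Induced

lemma ae_mem_of_map_apply_eq_one {Ω α : Type*} [MeasurableSpace Ω] [MeasurableSpace α]
    {P : Measure Ω} [IsProbabilityMeasure P] {f : Ω → α} (hf : Measurable f) {s : Set α}
    (hs : MeasurableSet s) (h : P.map f s = 1) : ∀ᵐ ω ∂P, f ω ∈ s :=
  (mem_ae_iff_prob_eq_one (hf hs)).2 (by rwa [Measure.map_apply hf hs] at h)

lemma sum_inducedOfInjective_pInv {ι G X : Type} [Fintype ι] [AddCommGroup G] [AddCommGroup X]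
    {p : G →+ X} (hp : Function.Injective p) (e : ι → X ≃+ X)
    (he : ∀ j, e j '' range p = range p) {y : ι → X} (hy : ∀ j, y j ∈ range p) :
    ∑ j, (e j).inducedOfInjective hp (he j) (pInv p (y j)) = pInv p (∑ j, e j (y j)) := by
  refine (pInv_apply_map hp _).symm.trans (congrArg (pInv p) ?_)
  simp only [map_sum, AddEquiv.map_inducedOfInjective_apply, map_pInv_of_mem_range (hy _)]

theorem reduction_along_monomorphism_general
    {X G : Type}
    [MetricSpace X]
    [AddCommGroup X] [IsTopologicalAddGroup X] [MeasurableSpace X] [BorelSpace X]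
    [MetricSpace G] [CompleteSpace G] [TopologicalSpace.SeparableSpace G]
    [AddCommGroup G] [IsTopologicalAddGroup G] [MeasurableSpace G] [BorelSpace G]
    (p : G →+ X) (hp : Continuous p) (hpinj : Function.Injective p)
    {Ω : Type} [MeasurableSpace Ω] (P : Measure Ω) [IsProbabilityMeasure P]
    (n : ℕ)
    (α β : Fin n → X ≃+ X)
    (hαc : ∀ j, Continuous (α j)) (hαs : ∀ j, Continuous (α j).symm)
    (hβc : ∀ j, Continuous (β j)) (hβs : ∀ j, Continuous (β j).symm)
    (hαp : ∀ j, α j '' Set.range p = Set.range p)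
    (hβp : ∀ j, β j '' Set.range p = Set.range p)
    (ξ : Fin n → Ω → X) (hξ : ∀ j, Measurable (ξ j))
    (hindep : iIndepFun ξ P)
    (μ : Fin n → Measure X) (hμ : ∀ j, μ j = P.map (ξ j))
    (x : Fin n → X) (hconc : ∀ j, (μ j).map (· + x j) (Set.range p) = 1)
    (hL : IndepFun (fun ω => ∑ j, α j (ξ j ω)) (fun ω => ∑ j, β j (ξ j ω)) P) :
    (∀ j, Measurable fun ω => pInv p (ξ j ω + x j)) ∧
    iIndepFun (fun j ω => pInv p (ξ j ω + x j)) P ∧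
    ∃ αh βh : Fin n → G ≃+ G,
      (∀ j, Continuous (αh j) ∧ Continuous (αh j).symm ∧
        ∀ g, p (αh j g) = α j (p g)) ∧
      (∀ j, Continuous (βh j) ∧ Continuous (βh j).symm ∧
        ∀ g, p (βh j g) = β j (p g)) ∧
      IndepFun (fun ω => ∑ j, αh j (pInv p (ξ j ω + x j)))
        (fun ω => ∑ j, βh j (pInv p (ξ j ω + x j))) P := by
  have hpe := hp.measurableEmbedding hpinj
  have hshift (c : X) : Measurable fun y => pInv p (y + c) :=
    (measurable_pInv hpe).comp (measurable_add_const c)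
  have hmem : ∀ᵐ ω ∂P, ∀ j, ξ j ω + x j ∈ range p := ae_all_iff.2 fun j =>
    ae_mem_of_map_apply_eq_one ((measurable_add_const _).comp (hξ j)) hpe.measurableSet_range <| by
      rw [← Measure.map_map (measurable_add_const _) (hξ j), ← hμ j, hconc j]
  have hlift (e : X ≃+ X) (he : e '' range p = range p) (hec : Continuous e)
      (hes : Continuous e.symm) :
      Continuous (e.inducedOfInjective hpinj he) ∧
        Continuous (e.inducedOfInjective hpinj he).symm ∧
        ∀ g, p (e.inducedOfInjective hpinj he g) = e (p g) :=
    ⟨e.continuous_inducedOfInjective hpinj he hp hec,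
      e.continuous_inducedOfInjective_symm hpinj he hp hes,
      AddEquiv.map_inducedOfInjective_apply hpinj he⟩
  have hform (e : Fin n → X ≃+ X) (he : ∀ j, e j '' range p = range p) :
      (fun ω => pInv p (∑ j, e j (ξ j ω) + ∑ j, e j (x j))) =ᵐ[P]
        fun ω => ∑ j, (e j).inducedOfInjective hpinj (he j) (pInv p (ξ j ω + x j)) :=
    hmem.mono fun ω hω => by
      simp only [sum_inducedOfInjective_pInv hpinj e he hω, map_add, Finset.sum_add_distrib]
  refine ⟨fun j => hshift (x j) |>.comp (hξ j), hindep.comp _ fun j => hshift (x j),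
    fun j => (α j).inducedOfInjective hpinj (hαp j),
    fun j => (β j).inducedOfInjective hpinj (hβp j),
    fun j => hlift _ _ (hαc j) (hαs j), fun j => hlift _ _ (hβc j) (hβs j), ?_⟩
  exact (hL.comp (hshift _) (hshift _)).congr (hform α hαp) (hform β hβp)

/-- **Proposition 1.**  Let `X` and `G` be complete separable metric Abelian groups,
`α j, β j ∈ Aut(X)`, `j = 1, …, n`, `n ≥ 2`, and `p : G → X` a continuous monomorphism
with `α j (p(G)) = β j (p(G)) = p(G)`.  Let `ξ j` be independent random variables with
values in `X` and distributions `μ j`, and assume there are `x j ∈ X` such that all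
`μ j * E_{x j}` are concentrated on `p(G)`.  If `L₁ = α 1 ξ 1 + ⋯ + α n ξ n` and
`L₂ = β 1 ξ 1 + ⋯ + β n ξ n` are independent, then `ξ̂ j = p⁻¹(ξ j + x j)` are
independent random variables with values in `G`, the maps `α̂ j = p⁻¹ ∘ α j ∘ p` and
`β̂ j = p⁻¹ ∘ β j ∘ p` are topological automorphisms of `G`, and the linear forms
`L̂₁ = α̂ 1 ξ̂ 1 + ⋯ + α̂ n ξ̂ n` and `L̂₂ = β̂ 1 ξ̂ 1 + ⋯ + β̂ n ξ̂ n` are independent. -/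
theorem reduction_along_monomorphism
    {X G : Type}
    [MetricSpace X] [CompleteSpace X] [TopologicalSpace.SeparableSpace X]
    [AddCommGroup X] [IsTopologicalAddGroup X] [MeasurableSpace X] [BorelSpace X]
    [MetricSpace G] [CompleteSpace G] [TopologicalSpace.SeparableSpace G]
    [AddCommGroup G] [IsTopologicalAddGroup G] [MeasurableSpace G] [BorelSpace G]
    (p : G →+ X) (hp : Continuous p) (hpinj : Function.Injective p)
    {Ω : Type} [MeasurableSpace Ω] (P : Measure Ω) [IsProbabilityMeasure P]
    (n : ℕ) (hn : 2 ≤ n)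
    (α β : Fin n → X ≃+ X)
    (hαc : ∀ j, Continuous (α j)) (hαs : ∀ j, Continuous (α j).symm)
    (hβc : ∀ j, Continuous (β j)) (hβs : ∀ j, Continuous (β j).symm)
    (hαp : ∀ j, α j '' Set.range p = Set.range p)
    (hβp : ∀ j, β j '' Set.range p = Set.range p)
    (ξ : Fin n → Ω → X) (hξ : ∀ j, Measurable (ξ j))
    (hindep : iIndepFun ξ P)
    (μ : Fin n → Measure X) (hμ : ∀ j, μ j = P.map (ξ j))
    (x : Fin n → X) (hconc : ∀ j, (μ j).map (· + x j) (Set.range p) = 1)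
    (hL : IndepFun (fun ω => ∑ j, α j (ξ j ω)) (fun ω => ∑ j, β j (ξ j ω)) P) :
    (∀ j, Measurable fun ω => pInv p (ξ j ω + x j)) ∧
    iIndepFun (fun j ω => pInv p (ξ j ω + x j)) P ∧
    ∃ αh βh : Fin n → G ≃+ G,
      (∀ j, Continuous (αh j) ∧ Continuous (αh j).symm ∧
        ∀ g, p (αh j g) = α j (p g)) ∧
      (∀ j, Continuous (βh j) ∧ Continuous (βh j).symm ∧
        ∀ g, p (βh j g) = β j (p g)) ∧
      IndepFun (fun ω => ∑ j, αh j (pInv p (ξ j ω + x j)))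
        (fun ω => ∑ j, βh j (pInv p (ξ j ω + x j))) P :=
  reduction_along_monomorphism_general p hp hpinj P n α β hαc hαs hβc hβs hαp hβp ξ hξ hindep μ hμ x
    hconc hL
end

section
/- Let Y be a topological Abelian group and let ψ be a continuous real-valued function on Y satisfying the equation Δ_{2k} Δ_h² ψ(y) = 0 for all h, k, y ∈ Y, together with ψ(−y) = ψ(y) for all y and ψ(0) = 0. Then ψ can be represented in the form ψ(y) = φ(y) + c_α for y ∈ y_α + cl(Y^{(2)}), where φ is a continuous function on Y satisfying φ(u+v) + φ(u−v) = 2[φ(u) + φ(v)] for all u, v ∈ Y, the c_α are real constants, and Y = ⋃_α (y_α + cl(Y^{(2)})), with y_0 = 0, is the decomposition of Y into cosets of the closure of the subgroup Y^{(2)} = {2y : y ∈ Y}. -/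
/-!
Putting `y = -h` in `Δ_{2k} Δ_h² ψ(y) = 0` and using that `ψ` is even with `ψ(0) = 0` gives the
parallelogram law `ψ(2k + h) + ψ(2k - h) = 2ψ(2k) + 2ψ(h)` whenever one argument lies in `2Y`.
Hence `φ(y) = ψ(2y)/4` satisfies the full parallelogram law, and four instances of the restricted
law show that `ψ - φ` is invariant under translation by `2Y`. Being continuous, `ψ - φ` is then
invariant under translation by the closure of `2Y`, i.e. constant on its cosets.
-/

/-- The closure of the subgroup `Y⁽²⁾ = {2y : y ∈ Y}` of a topological abelian group. -/
def twoSubgroupClosure (Y : Type) [AddCommGroup Y] [TopologicalSpace Y]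
    [IsTopologicalAddGroup Y] : AddSubgroup Y :=
  (AddMonoidHom.range (zsmulAddGroupHom (2 : ℤ) : Y →+ Y)).topologicalClosure

section Topological

variable {Y Z : Type*} [AddCommGroup Y] [TopologicalSpace Y] [IsTopologicalAddGroup Y]
  [TopologicalSpace Z] [T2Space Z] {f : Y → Z}

theorem AddSubgroup.apply_add_eq_of_mem_topologicalClosure (hf : Continuous f)
    {S : AddSubgroup Y} (hS : ∀ y, ∀ s ∈ S, f (y + s) = f y) (y : Y) {s : Y}
    (hs : s ∈ S.topologicalClosure) : f (y + s) = f y := by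
  have hclosed : IsClosed {s | f (y + s) = f y} :=
    isClosed_eq (hf.comp (continuous_const_add y)) continuous_const
  exact closure_minimal (hS y) hclosed hs

theorem AddSubgroup.exists_eq_comp_mk_topologicalClosure (hf : Continuous f)
    {S : AddSubgroup Y} (hS : ∀ y, ∀ s ∈ S, f (y + s) = f y) :
    ∃ c : Y ⧸ S.topologicalClosure → Z, ∀ y, f y = c (QuotientAddGroup.mk y) := by
  refine ⟨Quotient.lift f fun a b hab ↦ ?_, fun y ↦ rfl⟩
  rw [← add_neg_cancel_left a b]
  exact (apply_add_eq_of_mem_topologicalClosure hf hS a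
    (QuotientAddGroup.leftRel_apply.mp hab)).symm

end Topological

section Algebraic

variable {Y : Type*} [AddCommGroup Y] {ψ : Y → ℝ}

theorem parallelogram_at_double_of_diff_eq_zero (h0 : ψ 0 = 0) (heven : ∀ y, ψ (-y) = ψ y)
    (heq : ∀ h k y : Y,
      (ψ (y + (k + k) + (h + h)) - 2 * ψ (y + (k + k) + h) + ψ (y + (k + k))) -
        (ψ (y + (h + h)) - 2 * ψ (y + h) + ψ y) = 0)
    (k h : Y) : ψ (k + k + h) + ψ (k + k - h) = 2 * ψ (k + k) + 2 * ψ h := by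
  have e := heq h k (-h)
  have hneg := heven h
  abel_nf at e hneg ⊢
  simp only [neg_one_zsmul, h0] at e hneg ⊢
  linarith

noncomputable def quadraticPart (ψ : Y → ℝ) (y : Y) : ℝ := ψ (y + y) / 4

variable (hpar : ∀ k h : Y, ψ (k + k + h) + ψ (k + k - h) = 2 * ψ (k + k) + 2 * ψ h)
include hpar

theorem quadraticPart_parallelogram (u v : Y) :
    quadraticPart ψ (u + v) + quadraticPart ψ (u - v) =
      2 * (quadraticPart ψ u + quadraticPart ψ v) := by
  have e := hpar u (v + v)
  unfold quadraticPart
  abel_nf at e ⊢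
  linarith

theorem sub_quadraticPart_add_double (heven : ∀ y, ψ (-y) = ψ y) (y k : Y) :
    ψ (y + (k + k)) - quadraticPart ψ (y + (k + k)) = ψ y - quadraticPart ψ y := by
  have e₁ := hpar k (y + (k + k))
  have e₂ := hpar (y + k) (k + k)
  have e₃ := hpar (y + k) (y + (k + k))
  have e₄ := hpar (y + (k + k)) y
  have hneg := heven y
  unfold quadraticPart
  abel_nf at e₁ e₂ e₃ e₄ hneg ⊢
  simp only [neg_one_zsmul] at e₁ hneg ⊢
  linarith

end Algebraic

/-- **Lemma 9.**  Let `Y` be a topological Abelian group and `ψ : Y → ℝ` a continuous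
function satisfying `Δ_{2k} Δ_h² ψ(y) = 0` for all `h, k, y ∈ Y`, with `ψ(−y) = ψ(y)` and
`ψ(0) = 0`.  Then `ψ(y) = φ(y) + c_α` for `y ∈ y_α + cl (Y⁽²⁾)`, where `φ` is a continuous
function on `Y` satisfying `φ(u+v) + φ(u−v) = 2(φ(u) + φ(v))` and the constants `c_α`
depend only on the coset of `y` modulo the closure of `Y⁽²⁾` (i.e. there is a function `c`
on the quotient group with `ψ = φ + c ∘ mk`). -/
theorem quadratic_plus_coset_constants
    {Y : Type} [AddCommGroup Y] [TopologicalSpace Y] [IsTopologicalAddGroup Y]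
    (ψ : Y → ℝ) (hcont : Continuous ψ)
    (heq : ∀ h k y : Y,
      (ψ (y + (k + k) + (h + h)) - 2 * ψ (y + (k + k) + h) + ψ (y + (k + k))) -
        (ψ (y + (h + h)) - 2 * ψ (y + h) + ψ y) = 0)
    (heven : ∀ y, ψ (-y) = ψ y) (h0 : ψ 0 = 0) :
    ∃ φ : Y → ℝ, Continuous φ ∧
      (∀ u v : Y, φ (u + v) + φ (u - v) = 2 * (φ u + φ v)) ∧
      ∃ c : Y ⧸ twoSubgroupClosure Y → ℝ,
        ∀ y : Y, ψ y = φ y + c (QuotientAddGroup.mk y) := by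
  have hpar := parallelogram_at_double_of_diff_eq_zero h0 heven heq
  have hφ : Continuous (quadraticPart ψ) :=
    (hcont.comp (continuous_id.add continuous_id)).div_const 4
  have hinv : ∀ y, ∀ s ∈ (zsmulAddGroupHom (2 : ℤ) : Y →+ Y).range,
      (ψ - quadraticPart ψ) (y + s) = (ψ - quadraticPart ψ) y := by
    rintro y _ ⟨k, rfl⟩
    simpa [two_zsmul] using sub_quadraticPart_add_double hpar heven y k
  obtain ⟨c, hc⟩ := AddSubgroup.exists_eq_comp_mk_topologicalClosure (hcont.sub hφ) hinv
  refine ⟨quadraticPart ψ, hφ, quadraticPart_parallelogram hpar, c,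
    fun y ↦ eq_add_of_sub_eq' (hc y)⟩
end

section
/- Let X = ℝ^{ℵ_0} × T, where ℝ^{ℵ_0} is the space of all real sequences with the product topology and T is the circle group. Let ξ_1, ξ_2 be independent identically distributed random variables with values in X and common distribution μ whose characteristic function does not vanish. If the linear forms L_1 = ξ_1 + ξ_2 and L_2 = ξ_1 − ξ_2 are independent, then μ is a Gaussian distribution on X. -/
open MeasureTheory ProbabilityTheory

noncomputable instance : MeasurableSpace Circle := borel Circle
instance : BorelSpace Circle := ⟨rfl⟩
instance (α : Type) [MeasurableSpace α] : MeasurableSpace (Additive α) :=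
  ‹MeasurableSpace α›

/-- The pairing `⟨t, s⟩ = ∑ j, t j * s j` between `ℝ^ℵ₀` and the finitely supported
sequences `ℝ^{ℵ₀*}`. -/
noncomputable def pairSeq (t : ℕ → ℝ) (s : ℕ →₀ ℝ) : ℝ :=
  s.sum fun j c => t j * c

/-- The value at `x ∈ X = ℝ^ℵ₀ × 𝕋` of the character of `X` indexed by
`(s, n) ∈ ℝ^{ℵ₀*} × ℤ`, namely `exp(i⟨t, s⟩) zⁿ` for `x = (t, z)`. -/
noncomputable def charValRT (x : (ℕ → ℝ) × Additive Circle) (s : ℕ →₀ ℝ) (n : ℤ) : ℂ :=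
  Complex.exp (Complex.I * (pairSeq x.1 s : ℂ)) * ((x.2.toMul ^ n : Circle) : ℂ)

/-- The characteristic function of a measure `μ` on `X = ℝ^ℵ₀ × 𝕋` at the character
indexed by `(s, n)`. -/
noncomputable def charFnRT (μ : Measure ((ℕ → ℝ) × Additive Circle))
    (s : ℕ →₀ ℝ) (n : ℤ) : ℂ :=
  ∫ x, charValRT x s n ∂μ

/-- The finitely supported sequence determined by a vector `v ∈ ℝ^N`. -/
noncomputable def finsuppOfFin {N : ℕ} (v : Fin N → ℝ) : ℕ →₀ ℝ :=
  ∑ i : Fin N, Finsupp.single (i : ℕ) (v i)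

/-- A probability distribution `μ` on `X = ℝ^ℵ₀ × 𝕋` is Gaussian if its characteristic
function has the form `μ̂(y) = (x₀, y) exp(−φ(y))`, where `x₀ ∈ X` and `φ` is a
nonnegative function on the character group `ℝ^{ℵ₀*} × ℤ` satisfying
`φ(u+v) + φ(u−v) = 2(φ(u) + φ(v))` and continuous in the inductive limit topology of
`ℝ^{ℵ₀*}` (i.e. continuous on `ℝ^N × {k}` for every `N` and every `k ∈ ℤ`). -/
def IsGaussianRT (μ : Measure ((ℕ → ℝ) × Additive Circle)) : Prop :=
  IsProbabilityMeasure μ ∧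
  ∃ (x₀ : (ℕ → ℝ) × Additive Circle) (φ : (ℕ →₀ ℝ) × ℤ → ℝ),
    (∀ y, 0 ≤ φ y) ∧
    (∀ N : ℕ, ∀ k : ℤ, Continuous fun v : Fin N → ℝ => φ (finsuppOfFin v, k)) ∧
    (∀ u v : (ℕ →₀ ℝ) × ℤ, φ (u + v) + φ (u - v) = 2 * (φ u + φ v)) ∧
    ∀ (s : ℕ →₀ ℝ) (n : ℤ),
      charFnRT μ s n = charValRT x₀ s n * Complex.exp (-(φ (s, n) : ℂ))

/-!
Computing `E[χ(ξ₁ + ξ₂, u) χ(ξ₁ - ξ₂, v)]` once through the independence of `ξ₁, ξ₂` and once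
through that of `ξ₁ ± ξ₂` gives Heyde's functional equation
`μ̂(u + v) μ̂(u - v) = μ̂(u)² |μ̂(v)|²`. As `μ̂` does not vanish, `φ = -log |μ̂|` satisfies the
parallelogram law and the phase `μ̂ / |μ̂|` solves Jensen's equation `h(u + v) h(u - v) = h(u)²`.
A solution of Jensen's equation is additive on even elements; every `(s, 0)` is even and `(0, 1)`
generates the `ℤ` factor, so the phase is a character of `ℝ^{ℵ₀*} × ℤ`. It is continuous on each
coordinate axis, and the continuous characters of `ℝ` are `r ↦ exp(iar)`, so the phase is
`y ↦ (x₀, y)` for some `x₀ ∈ X`.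
-/

section Jensen

variable {G M : Type*} [AddCommGroup G] [CommGroup M] {w : G → M}

lemma jensen_map_neg (h0 : w 0 = 1) (hJ : ∀ u v, w (u + v) * w (u - v) = w u ^ 2) (y : G) :
    w (-y) = (w y)⁻¹ := by
  have h := hJ 0 y
  rw [zero_add, zero_sub, h0, one_pow] at h
  exact eq_inv_of_mul_eq_one_right h

lemma jensen_map_add_self_add (h0 : w 0 = 1) (hJ : ∀ u v, w (u + v) * w (u - v) = w u ^ 2)
    (a y : G) : w (a + a + y) = w a ^ 2 * w y := by
  have h := hJ a (a + y)
  rw [← add_assoc, show a - (a + y) = -y by abel, jensen_map_neg h0 hJ] at h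
  exact mul_inv_eq_iff_eq_mul.1 h

lemma jensen_map_add_of_even (h0 : w 0 = 1) (hJ : ∀ u v, w (u + v) * w (u - v) = w u ^ 2)
    {x : G} (hx : Even x) (y : G) : w (x + y) = w x * w y := by
  obtain ⟨a, rfl⟩ := hx
  have h := jensen_map_add_self_add h0 hJ a 0
  rw [add_zero, h0, mul_one] at h
  rw [jensen_map_add_self_add h0 hJ, h]

lemma jensen_map_zsmul (h0 : w 0 = 1) (hJ : ∀ u v, w (u + v) * w (u - v) = w u ^ 2)
    (g : G) (n : ℤ) : w (n • g) = w g ^ n := by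
  suffices ∀ n : ℤ, w (n • g) = w g ^ n ∧ w ((n + 1) • g) = w g ^ (n + 1) from (this n).1
  intro n
  induction n using Int.induction_on with
  | zero => simp [h0]
  | succ i ih =>
    refine ⟨ih.2, ?_⟩
    rw [show ((i : ℤ) + 1 + 1) • g = g + g + (i : ℤ) • g by
      rw [add_smul, add_smul, one_smul]; abel, jensen_map_add_self_add h0 hJ, ih.1]
    group
  | pred i ih =>
    refine ⟨?_, by rw [sub_add_cancel]; exact ih.1⟩
    have h := jensen_map_add_self_add h0 hJ g ((-(i : ℤ) - 1) • g)
    rw [show g + g + (-(i : ℤ) - 1) • g = (-(i : ℤ) + 1) • g by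
      rw [sub_smul, add_smul, one_smul]; abel, ih.2] at h
    rw [eq_inv_mul_of_mul_eq h.symm]
    group

end Jensen

lemma exists_hasDerivAt_eq_mul_of_map_add {g : ℝ → ℂ} (hg : Continuous g) (h0 : g 0 = 1)
    (hadd : ∀ a b, g (a + b) = g a * g b) : ∃ c : ℂ, ∀ x, HasDerivAt g (c * g x) x := by
  set G : ℝ → ℂ := fun x => ∫ t in (0 : ℝ)..x, g t
  have hG : ∀ x, HasDerivAt G (g x) x := fun x => (hg.integral_hasStrictDerivAt 0 x).hasDerivAt
  obtain ⟨δ, hδ⟩ : ∃ δ, G δ ≠ 0 := ((hG 0).eventually_ne (by simp [h0])).exists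
  -- so `g = (G (· + δ) - G) / G δ` is differentiable, `G` being a primitive of `g`
  have hshift : ∀ x, G (x + δ) - G x = g x * G δ := by
    intro x
    simp only [G]
    rw [intervalIntegral.integral_interval_sub_left (hg.intervalIntegrable _ _)
      (hg.intervalIntegrable _ _), ← intervalIntegral.integral_const_mul]
    simp_rw [← hadd]
    simp [(intervalIntegral.integral_comp_add_left g x (a := 0) (b := δ))]
  refine ⟨(g δ - 1) / G δ, fun x => ?_⟩
  have hgG : g = fun x => (G (x + δ) - G x) / G δ := by
    funext x
    rw [hshift, mul_div_cancel_right₀ _ hδ]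
  have hd : HasDerivAt (fun x => (G (x + δ) - G x) / G δ) ((g (x + δ) - g x) / G δ) x :=
    (((hG (x + δ)).comp_add_const x δ).sub (hG x)).div_const (G δ)
  rw [← hgG, hadd] at hd
  convert hd using 1
  ring

lemma eq_exp_of_hasDerivAt_eq_mul {g : ℝ → ℂ} {c : ℂ} (hg : ∀ x, HasDerivAt g (c * g x) x)
    (h0 : g 0 = 1) (x : ℝ) : g x = Complex.exp (c * x) := by
  have hd : ∀ y : ℝ, HasDerivAt (fun y : ℝ => g y * Complex.exp (-(c * y))) 0 y := by
    intro y
    have he : HasDerivAt (fun y : ℝ => Complex.exp (-(c * y)))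
        (-c * Complex.exp (-(c * y))) y := by
      simpa [mul_comm] using ((hasDerivAt_id (y : ℂ)).const_mul c).neg.cexp.comp_ofReal
    exact ((hg y).mul he).congr_deriv (by ring)
  have hconst := is_const_of_deriv_eq_zero (fun y => (hd y).differentiableAt)
    (fun y => (hd y).deriv) x 0
  simp only [Complex.ofReal_zero, mul_zero, neg_zero, Complex.exp_zero, mul_one, h0] at hconst
  rw [← mul_one (g x), ← Complex.exp_zero, ← neg_add_cancel (c * x), Complex.exp_add, ← mul_assoc,
    hconst, one_mul]

lemma AddChar.exists_eq_circleExp_mul (e : AddChar ℝ Circle) (he : Continuous e) :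
    ∃ a : ℝ, ∀ r, e r = Circle.exp (a * r) := by
  obtain ⟨c, hc⟩ := exists_hasDerivAt_eq_mul_of_map_add (g := fun r => (e r : ℂ))
    (continuous_subtype_val.comp he) (by simp) (fun a b => by simp [AddChar.map_add_eq_mul])
  have hexp := eq_exp_of_hasDerivAt_eq_mul hc (by simp)
  have hre : c.re = 0 := by
    have h1 := Circle.norm_coe (e 1)
    rw [hexp, Complex.norm_exp] at h1
    simpa using h1
  refine ⟨c.im, fun r => Circle.ext ?_⟩
  rw [hexp, Circle.coe_exp]
  congr 1
  apply Complex.ext <;> simp [hre]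

section Pairing

variable (t t' : ℕ → ℝ) (s s' : ℕ →₀ ℝ)

lemma pairSeq_add_left : pairSeq (t + t') s = pairSeq t s + pairSeq t' s := by
  simp [pairSeq, add_mul, Finsupp.sum_add]

lemma pairSeq_sub_left : pairSeq (t - t') s = pairSeq t s - pairSeq t' s := by
  simp [pairSeq, sub_mul, Finsupp.sum_sub]

lemma pairSeq_add_right : pairSeq t (s + s') = pairSeq t s + pairSeq t s' :=
  Finsupp.sum_add_index' (fun _ => mul_zero _) (fun _ _ _ => mul_add _ _ _)

lemma pairSeq_sub_right : pairSeq t (s - s') = pairSeq t s - pairSeq t s' :=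
  Finsupp.sum_sub_index (fun _ _ _ => mul_sub _ _ _)

@[simp]
lemma pairSeq_zero_right : pairSeq t 0 = 0 := Finsupp.sum_zero_index

@[simp]
lemma pairSeq_single (j : ℕ) (r : ℝ) : pairSeq t (Finsupp.single j r) = t j * r :=
  Finsupp.sum_single_index (mul_zero _)

lemma pairSeq_finsuppOfFin {N : ℕ} (v : Fin N → ℝ) :
    pairSeq t (finsuppOfFin v) = ∑ i : Fin N, t i * v i := by
  rw [finsuppOfFin, pairSeq, ← Finsupp.sum_finsetSum_index (fun _ => mul_zero _)
    (fun _ _ _ => mul_add _ _ _)]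
  simp

lemma measurable_pairSeq_left : Measurable fun x : ℕ → ℝ => pairSeq x s :=
  Finset.measurable_sum _ fun j _ => (measurable_pi_apply j).mul_const _

end Pairing

abbrev RTSpace := (ℕ → ℝ) × Additive Circle

abbrev RTDual := (ℕ →₀ ℝ) × ℤ

noncomputable def charRT (x : RTSpace) (y : RTDual) : Circle :=
  Circle.exp (pairSeq x.1 y.1) * x.2.toMul ^ y.2

lemma coe_charRT (x : RTSpace) (y : RTDual) : (charRT x y : ℂ) = charValRT x y.1 y.2 := by
  simp [charRT, charValRT, mul_comm]

section CharRT

variable (x x' : RTSpace) (y y' : RTDual)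

lemma charRT_add_left : charRT (x + x') y = charRT x y * charRT x' y := by
  simp only [charRT, Prod.fst_add, Prod.snd_add, pairSeq_add_left, Circle.exp_add, toMul_add,
    mul_zpow]
  ac_rfl

lemma charRT_sub_left : charRT (x - x') y = charRT x y / charRT x' y := by
  simp only [charRT, Prod.fst_sub, Prod.snd_sub, pairSeq_sub_left, Circle.exp_sub, toMul_sub,
    div_zpow]
  exact div_mul_div_comm _ _ _ _

lemma charRT_add_right : charRT x (y + y') = charRT x y * charRT x y' := by
  simp only [charRT, Prod.fst_add, Prod.snd_add, pairSeq_add_right, Circle.exp_add, zpow_add]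
  ac_rfl

lemma charRT_sub_right : charRT x (y - y') = charRT x y / charRT x y' := by
  simp only [charRT, Prod.fst_sub, Prod.snd_sub, pairSeq_sub_right, Circle.exp_sub, zpow_sub]
  exact div_mul_div_comm _ _ _ _

@[simp]
lemma charRT_zero_right : charRT x 0 = 1 := by
  simp [charRT]

lemma charRT_add_mul_charRT_sub :
    charRT (x + x') y * charRT (x - x') y' = charRT x (y + y') * charRT x' (y - y') := by
  simp only [charRT_add_left, charRT_sub_left, charRT_add_right, charRT_sub_right, div_eq_mul_inv]
  ac_rfl

lemma charRT_neg_right : charRT x (-y) = (charRT x y)⁻¹ := by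
  rw [← zero_sub, charRT_sub_right, charRT_zero_right, one_div]

lemma measurable_charRT : Measurable fun x : RTSpace => (charRT x y : ℂ) := by
  have hexp : Continuous fun r : ℝ => (Circle.exp r : ℂ) :=
    continuous_subtype_val.comp (map_continuous _)
  have hpow : Continuous fun z : Circle => ((z ^ y.2 : Circle) : ℂ) :=
    continuous_subtype_val.comp (continuous_zpow y.2)
  simp only [charRT, Circle.coe_mul]
  exact (hexp.measurable.comp ((measurable_pairSeq_left y.1).comp measurable_fst)).mul
    (hpow.measurable.comp measurable_snd)

end CharRT

noncomputable def charFnDual (μ : Measure RTSpace) (y : RTDual) : ℂ :=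
  charFnRT μ y.1 y.2

lemma charFnDual_eq_integral (μ : Measure RTSpace) (y : RTDual) :
    charFnDual μ y = ∫ x, (charRT x y : ℂ) ∂μ := by
  simp [charFnDual, charFnRT, coe_charRT]

section CharFn

variable {μ : Measure RTSpace}

@[simp]
lemma charFnDual_zero [IsProbabilityMeasure μ] : charFnDual μ 0 = 1 := by
  simp [charFnDual_eq_integral]

lemma norm_charFnDual_le_one [IsProbabilityMeasure μ] (y : RTDual) : ‖charFnDual μ y‖ ≤ 1 := by
  rw [charFnDual_eq_integral]
  refine (norm_integral_le_integral_norm _).trans ?_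
  simp [Circle.norm_coe]

lemma charFnDual_neg (y : RTDual) : charFnDual μ (-y) = starRingEnd ℂ (charFnDual μ y) := by
  simp_rw [charFnDual_eq_integral, charRT_neg_right, Circle.coe_inv_eq_conj]
  exact integral_conj

lemma continuous_charFnDual_comp [IsFiniteMeasure μ] {T : Type*} [TopologicalSpace T]
    [FirstCountableTopology T] {σ : T → ℕ →₀ ℝ}
    (hσ : ∀ t : ℕ → ℝ, Continuous fun τ => pairSeq t (σ τ)) (n : ℤ) :
    Continuous fun τ => charFnDual μ (σ τ, n) := by
  simp only [charFnDual_eq_integral]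
  refine continuous_of_dominated (bound := fun _ => 1)
    (fun τ => (measurable_charRT _).aestronglyMeasurable)
    (fun τ => ae_of_all _ fun x => (Circle.norm_coe _).le) (integrable_const 1)
    (ae_of_all _ fun x => ?_)
  show Continuous fun τ => ((Circle.exp (pairSeq x.1 (σ τ)) * x.2.toMul ^ n : Circle) : ℂ)
  exact continuous_subtype_val.comp ((Circle.exp.continuous.comp (hσ x.1)).mul continuous_const)

end CharFn

section Independence

variable {Ω : Type*} [MeasurableSpace Ω] {P : Measure Ω} {ξ₁ ξ₂ : Ω → RTSpace}

lemma integral_charRT_comp (hξ : Measurable ξ₁) (y : RTDual) :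
    ∫ ω, (charRT (ξ₁ ω) y : ℂ) ∂P = charFnDual (P.map ξ₁) y := by
  rw [charFnDual_eq_integral,
    integral_map hξ.aemeasurable (measurable_charRT y).aestronglyMeasurable]

lemma ProbabilityTheory.IndepFun.integral_charRT_mul_charRT (hindep : IndepFun ξ₁ ξ₂ P)
    (hξ₁ : Measurable ξ₁) (hξ₂ : Measurable ξ₂) (y y' : RTDual) :
    ∫ ω, (charRT (ξ₁ ω) y : ℂ) * charRT (ξ₂ ω) y' ∂P
      = charFnDual (P.map ξ₁) y * charFnDual (P.map ξ₂) y' := by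
  rw [hindep.integral_fun_comp_mul_comp hξ₁.aemeasurable hξ₂.aemeasurable
    (measurable_charRT y).aestronglyMeasurable (measurable_charRT y').aestronglyMeasurable,
    integral_charRT_comp hξ₁, integral_charRT_comp hξ₂]

lemma charFnDual_add_mul_charFnDual_sub (hξ₁ : Measurable ξ₁) (hξ₂ : Measurable ξ₂)
    (hindep : IndepFun ξ₁ ξ₂ P)
    (hL : IndepFun (fun ω => ξ₁ ω + ξ₂ ω) (fun ω => ξ₁ ω - ξ₂ ω) P)
    {μ : Measure RTSpace} (hμ₁ : μ = P.map ξ₁) (hμ₂ : μ = P.map ξ₂) (u v : RTDual) :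
    charFnDual μ (u + v) * charFnDual μ (u - v)
      = charFnDual μ u ^ 2 * ‖charFnDual μ v‖ ^ 2 := by
  have hprod : ∀ y y', ∫ ω, (charRT (ξ₁ ω) y : ℂ) * charRT (ξ₂ ω) y' ∂P
      = charFnDual μ y * charFnDual μ y' := by
    intro y y'
    rw [hindep.integral_charRT_mul_charRT hξ₁ hξ₂, ← hμ₁, ← hμ₂]
  have hsum : ∀ y, (fun ω => (charRT (ξ₁ ω + ξ₂ ω) y : ℂ))
      = fun ω => (charRT (ξ₁ ω) y : ℂ) * charRT (ξ₂ ω) y := by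
    intro y; funext ω; rw [charRT_add_left, Circle.coe_mul]
  have hdiff : ∀ y, (fun ω => (charRT (ξ₁ ω - ξ₂ ω) y : ℂ))
      = fun ω => (charRT (ξ₁ ω) y : ℂ) * charRT (ξ₂ ω) (-y) := by
    intro y; funext ω; rw [charRT_sub_left, charRT_neg_right, div_eq_mul_inv, Circle.coe_mul]
  have hLprod :=
    (hL.comp (measurable_charRT u) (measurable_charRT v)).integral_fun_mul_eq_mul_integral
      (by rw [Function.comp_def, hsum]
          exact (((measurable_charRT u).comp hξ₁).mul
            ((measurable_charRT u).comp hξ₂)).aestronglyMeasurable)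
      (by rw [Function.comp_def, hdiff]
          exact (((measurable_charRT v).comp hξ₁).mul
            ((measurable_charRT (-v)).comp hξ₂)).aestronglyMeasurable)
  simp only [Function.comp_apply] at hLprod
  calc charFnDual μ (u + v) * charFnDual μ (u - v)
      = ∫ ω, (charRT (ξ₁ ω) (u + v) : ℂ) * charRT (ξ₂ ω) (u - v) ∂P := (hprod _ _).symm
    _ = ∫ ω, (charRT (ξ₁ ω + ξ₂ ω) u : ℂ) * charRT (ξ₁ ω - ξ₂ ω) v ∂P := by
        simp_rw [← Circle.coe_mul, charRT_add_mul_charRT_sub]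
    _ = charFnDual μ u * charFnDual μ u * (charFnDual μ v * charFnDual μ (-v)) := by
        rw [hLprod, hsum, hdiff, hprod, hprod]
    _ = charFnDual μ u ^ 2 * ‖charFnDual μ v‖ ^ 2 := by
        rw [charFnDual_neg, Complex.mul_conj, Complex.normSq_eq_norm_sq]
        push_cast
        ring

end Independence

section Phase

lemma circleExp_arg_mul {z w : ℂ} (hz : z ≠ 0) (hw : w ≠ 0) :
    Circle.exp (Complex.arg (z * w))
      = Circle.exp (Complex.arg z) * Circle.exp (Complex.arg w) := by
  simp only [← Real.Angle.toCircle_coe, Complex.arg_mul_coe_angle hz hw, Real.Angle.toCircle_add]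

lemma circleExp_arg_ofReal {r : ℝ} (hr : 0 ≤ r) : Circle.exp (Complex.arg r) = 1 := by
  rw [Complex.arg_ofReal_of_nonneg hr, Circle.exp_zero]

lemma coe_circleExp_arg {z : ℂ} (hz : z ≠ 0) : (Circle.exp (Complex.arg z) : ℂ) = z / ‖z‖ := by
  rw [eq_div_iff (by simpa using hz), mul_comm, Circle.coe_exp]
  exact Complex.norm_mul_exp_arg_mul_I z

end Phase

section HeydeEquation

variable {G : Type*} [AddCommGroup G] {F : G → ℂ}

lemma neg_log_norm_parallelogram (hnv : ∀ y, F y ≠ 0)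
    (hfe : ∀ u v, F (u + v) * F (u - v) = F u ^ 2 * ‖F v‖ ^ 2) (u v : G) :
    -Real.log ‖F (u + v)‖ + -Real.log ‖F (u - v)‖
      = 2 * (-Real.log ‖F u‖ + -Real.log ‖F v‖) := by
  have hpos : ∀ y, 0 < ‖F y‖ := fun y => norm_pos_iff.2 (hnv y)
  have h := congrArg (fun z => Real.log ‖z‖) (hfe u v)
  simp only [norm_mul, norm_pow, Complex.norm_real, norm_norm] at h
  rw [Real.log_mul (hpos _).ne' (hpos _).ne', Real.log_mul (pow_pos (hpos _) 2).ne'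
    (pow_pos (hpos _) 2).ne', Real.log_pow, Real.log_pow] at h
  push_cast at h
  linarith

lemma circleExp_arg_jensen (hnv : ∀ y, F y ≠ 0)
    (hfe : ∀ u v, F (u + v) * F (u - v) = F u ^ 2 * ‖F v‖ ^ 2) (u v : G) :
    Circle.exp (Complex.arg (F (u + v))) * Circle.exp (Complex.arg (F (u - v)))
      = Circle.exp (Complex.arg (F u)) ^ 2 := by
  have h := congrArg (fun z => Circle.exp (Complex.arg z)) (hfe u v)
  rwa [circleExp_arg_mul (hnv _) (hnv _), ← Complex.ofReal_pow,
    circleExp_arg_mul (pow_ne_zero 2 (hnv u)) (by simpa using hnv v),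
    circleExp_arg_ofReal (by positivity), mul_one, sq, circleExp_arg_mul (hnv u) (hnv u),
    ← sq] at h

end HeydeEquation

lemma AddChar.exists_eq_circleExp_pairSeq (χ : AddChar (ℕ →₀ ℝ) Circle)
    (hχ : ∀ j, Continuous fun r : ℝ => χ (Finsupp.single j r)) :
    ∃ t : ℕ → ℝ, ∀ s, χ s = Circle.exp (pairSeq t s) := by
  choose t ht using fun j =>
    (χ.compAddMonoidHom (Finsupp.singleAddHom j)).exists_eq_circleExp_mul (hχ j)
  refine ⟨t, fun s => ?_⟩
  induction s using Finsupp.induction with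
  | zero => simp
  | single_add j r s _ _ ih =>
    rw [AddChar.map_add_eq_mul, ih, pairSeq_add_right, Circle.exp_add, pairSeq_single, ← ht j r]
    rfl

lemma exists_charRT_eq_of_jensen {w : RTDual → Circle} (h0 : w 0 = 1)
    (hJ : ∀ u v, w (u + v) * w (u - v) = w u ^ 2)
    (hcont : ∀ j, Continuous fun r : ℝ => w (Finsupp.single j r, 0)) :
    ∃ x₀ : RTSpace, ∀ y, w y = charRT x₀ y := by
  have heven : ∀ s : ℕ →₀ ℝ, Even ((s, 0) : RTDual) := fun s =>
    ⟨((2 : ℝ)⁻¹ • s, 0), by ext <;> simp; ring⟩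
  let χ : AddChar (ℕ →₀ ℝ) Circle :=
    { toFun := fun s => w (s, 0)
      map_zero_eq_one' := h0
      map_add_eq_mul' := fun s s' => by
        simpa using jensen_map_add_of_even h0 hJ (heven s) (s', 0) }
  obtain ⟨t, ht⟩ := χ.exists_eq_circleExp_pairSeq hcont
  refine ⟨(t, Additive.ofMul (w (0, 1))), fun ⟨s, n⟩ => ?_⟩
  have hsplit : ((s, n) : RTDual) = (s, 0) + n • (0, 1) := by ext <;> simp
  calc w (s, n) = w (s, 0) * w (0, 1) ^ n := by
        rw [hsplit, jensen_map_add_of_even h0 hJ (heven s), jensen_map_zsmul h0 hJ]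
    _ = charRT (t, Additive.ofMul (w (0, 1))) (s, n) := by
        rw [charRT, ← ht]
        rfl

lemma isGaussianRT_of_charFnDual_add_mul_sub {μ : Measure RTSpace} [IsProbabilityMeasure μ]
    (hnv : ∀ y, charFnDual μ y ≠ 0)
    (hfe : ∀ u v, charFnDual μ (u + v) * charFnDual μ (u - v)
      = charFnDual μ u ^ 2 * ‖charFnDual μ v‖ ^ 2) :
    IsGaussianRT μ := by
  set F := charFnDual μ
  have hpos : ∀ y, 0 < ‖F y‖ := fun y => norm_pos_iff.2 (hnv y)
  set h : RTDual → Circle := fun y => Circle.exp (Complex.arg (F y))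
  have hcont : ∀ j, Continuous fun r : ℝ => h (Finsupp.single j r, 0) := by
    intro j
    have hF := continuous_charFnDual_comp (μ := μ) (σ := Finsupp.single j)
      (fun t => by simpa using continuous_const_mul (t j)) 0
    refine continuous_induced_rng.2 <| (hF.div (Complex.continuous_ofReal.comp hF.norm)
      fun r => by simpa using hnv _).congr fun r => (coe_circleExp_arg (hnv _)).symm
  obtain ⟨x₀, hx₀⟩ :=
    exists_charRT_eq_of_jensen (by simp [h, F]) (circleExp_arg_jensen hnv hfe) hcont
  refine ⟨‹_›, x₀, fun y => -Real.log ‖F y‖, fun y => ?_, fun N k => ?_,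
    neg_log_norm_parallelogram hnv hfe, fun s n => ?_⟩
  · exact neg_nonneg.2 (Real.log_nonpos (norm_nonneg _) (norm_charFnDual_le_one y))
  · refine ((continuous_charFnDual_comp (fun t => ?_) k).norm.log fun v => (hpos _).ne').neg
    simp_rw [pairSeq_finsuppOfFin]
    fun_prop
  · calc charFnRT μ s n = h (s, n) * (‖F (s, n)‖ : ℂ) := by
          rw [coe_circleExp_arg (hnv _), div_mul_cancel₀ _ (by simpa using (hpos _).ne')]
          rfl
      _ = charValRT x₀ s n * Complex.exp (-((-Real.log ‖F (s, n)‖ : ℝ) : ℂ)) := by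
          rw [hx₀, coe_charRT, Complex.ofReal_neg, neg_neg, ← Complex.ofReal_exp,
            Real.exp_log (hpos _)]

/-- **Lemma 11.**  Let `X = ℝ^ℵ₀ × 𝕋`.  Let `ξ₁, ξ₂` be independent identically
distributed random variables with values in `X` and distribution `μ` whose characteristic
function does not vanish.  If `L₁ = ξ₁ + ξ₂` and `L₂ = ξ₁ − ξ₂` are independent, then `μ`
is Gaussian. -/
theorem gaussian_of_sum_diff_indep_RN_times_circle
    {Ω : Type} [MeasurableSpace Ω] (P : Measure Ω) [IsProbabilityMeasure P]
    (ξ₁ ξ₂ : Ω → (ℕ → ℝ) × Additive Circle)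
    (hξ₁ : Measurable ξ₁) (hξ₂ : Measurable ξ₂)
    (hindep : IndepFun ξ₁ ξ₂ P)
    (μ : Measure ((ℕ → ℝ) × Additive Circle)) (hμ₁ : μ = P.map ξ₁) (hμ₂ : μ = P.map ξ₂)
    (hnv : ∀ (s : ℕ →₀ ℝ) (n : ℤ), charFnRT μ s n ≠ 0)
    (hL : IndepFun (fun ω => ξ₁ ω + ξ₂ ω) (fun ω => ξ₁ ω - ξ₂ ω) P) :
    IsGaussianRT μ := by
  have : IsProbabilityMeasure μ := hμ₁ ▸ Measure.isProbabilityMeasure_map hξ₁.aemeasurable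
  exact isGaussianRT_of_charFnDual_add_mul_sub (fun y => hnv y.1 y.2)
    (charFnDual_add_mul_charFnDual_sub hξ₁ hξ₂ hindep hL hμ₁ hμ₂)
end

section
/- Let Y = ℝ^b × ℤ and H = ℝ^b × 2ℤ = Y^{(2)}. Suppose l_1, l_2 : Y → ℂ are functions with |l_j(y)| = 1 and l_j(−y) equal to the complex conjugate of l_j(y) for all y ∈ Y, such that l_j(y) = 1 for all y ∈ H and l_j(u+v) l_j(u−v) = 1 for all u ∈ H and v ∈ Y. Then l_j(s, n) = l_j(0, n) for all s ∈ ℝ^b and n ∈ ℤ; if in addition l_1 and l_2 satisfy l_1(u+v) l_2(u+εv) = l_1(u) l_1(v) l_2(u) l_2(εv) for all u, v ∈ Y, where ε(s, n) = (αs + nv_0, −n) for some α ∈ Aut(ℝ^b) and v_0 ∈ ℝ^b, then l_1 and l_2 are characters of the group Y. -/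
/-!
For `u ∈ H` the identity `l (u + v) * l (u - v) = 1` together with `l (-y) = (l y)⁻¹` says
`l (x + 2u) = l x`; as `ℝ^b` is divisible by `2`, `l` depends only on the `ℤ`-coordinate, and
`l (0, n + 2) * l (0, n) = 1` forces `l (s, n) = c ^ n` with `c = l (0, 1)` as soon as `c² = 1`.
Since `ε` negates the `ℤ`-coordinate, the cocycle identity at `u = (0, 1)`, `v = (0, ±1)` gives
exactly `l₁ (0, 1)² = 1` and `l₂ (0, 1)² = 1`.
-/

/-- The automorphism `ε` of `Y = ℝ^b × ℤ` adjoint to an automorphism of `ℝ^b × 𝕋`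
restricting to `-I` on `𝕋`:  `ε(s, n) = (α s + n v₀, -n)`. -/
def epsAut {b : ℕ} (α : (Fin b → ℝ) ≃ₗ[ℝ] (Fin b → ℝ)) (v₀ : Fin b → ℝ) :
    (Fin b → ℝ) × ℤ → (Fin b → ℝ) × ℤ :=
  fun y => (α y.1 + y.2 • v₀, -y.2)

open ComplexConjugate

theorem eq_zpow_of_mul_apply_add_two {M : Type*} [GroupWithZero M] {f : ℤ → M}
    (h0 : f 0 = 1) (h1 : f 1 * f 1 = 1) (h2 : ∀ n, f (n + 2) * f n = 1) (n : ℤ) :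
    f n = f 1 ^ n := by
  set c := f 1
  have inv_pow_self (k : ℤ) : (c ^ k)⁻¹ = c ^ k := by
    rw [← inv_zpow, inv_eq_of_mul_eq_one_right h1]
  have pow_add_two (k : ℤ) : c ^ (k + 2) = c ^ k := by
    rw [zpow_add₀ (left_ne_zero_of_mul_eq_one h1), zpow_two, h1, mul_one]
  have step (k : ℤ) : f (k + 2) = (f k)⁻¹ := eq_inv_of_mul_eq_one_left (h2 k)
  suffices ∀ n : ℤ, f n = c ^ n ∧ f (n + 1) = c ^ (n + 1) from (this n).1
  intro n
  induction n using Int.induction_on with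
  | zero => simp [h0, c]
  | succ k ih =>
    refine ⟨ih.2, ?_⟩
    rw [add_assoc, one_add_one_eq_two, step, ih.1, inv_pow_self, pow_add_two]
  | pred k ih =>
    refine ⟨?_, by simpa using ih.1⟩
    have h := eq_inv_of_mul_eq_one_right (h2 (-k - 1))
    rw [show -(k : ℤ) - 1 + 2 = -k + 1 by ring, ih.2, inv_pow_self] at h
    rw [h, ← pow_add_two (-k - 1)]
    ring_nf

section NormalizedFactor

variable {E : Type*} [AddCommGroup E]

/-- The hypotheses on `l₁, l₂` on `Y = E × ℤ`; membership in `H = E × 2ℤ` is `Even _.2`. -/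
structure IsNormalizedFactor (l : E × ℤ → ℂ) : Prop where
  norm_eq_one : ∀ y, ‖l y‖ = 1
  apply_neg : ∀ y, l (-y) = conj (l y)
  apply_of_even : ∀ s n, Even n → l (s, n) = 1
  mul_apply_add_sub : ∀ u v, Even u.2 → l (u + v) * l (u - v) = 1

namespace IsNormalizedFactor

variable {l : E × ℤ → ℂ} (hl : IsNormalizedFactor l)
include hl

theorem apply_eq_one_of_even_snd {y : E × ℤ} (hy : Even y.2) : l y = 1 :=
  hl.apply_of_even y.1 y.2 hy

theorem ne_zero (y : E × ℤ) : l y ≠ 0 :=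
  norm_ne_zero_iff.mp (by rw [hl.norm_eq_one y]; exact one_ne_zero)

theorem apply_neg_eq_inv (y : E × ℤ) : l (-y) = (l y)⁻¹ := by
  rw [hl.apply_neg, Complex.inv_eq_conj (hl.norm_eq_one y)]

theorem apply_add_two_smul {u : E × ℤ} (hu : Even u.2) (x : E × ℤ) : l (x + 2 • u) = l x := by
  have h := hl.mul_apply_add_sub u (x + u) hu
  rw [show u + (x + u) = x + 2 • u by abel, show u - (x + u) = -x by abel,
    hl.apply_neg_eq_inv] at h
  exact (mul_inv_eq_one₀ (hl.ne_zero x)).mp h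

theorem mul_apply_zero_add_two (n : ℤ) : l (0, n + 2) * l (0, n) = 1 := by
  rcases Int.even_or_odd n with hn | hn
  · rw [hl.apply_of_even 0 _ (hn.add even_two), hl.apply_of_even 0 n hn, mul_one]
  · simpa [add_assoc, one_add_one_eq_two] using
      hl.mul_apply_add_sub (0, n + 1) (0, 1) hn.add_one

variable [Module ℝ E]

theorem apply_eq_apply_zero (s : E) (n : ℤ) : l (s, n) = l (0, n) := by
  have h := hl.apply_add_two_smul (u := ((2 : ℝ)⁻¹ • s, 0)) Even.zero (0, n)
  rwa [show ((0 : E), n) + 2 • ((2 : ℝ)⁻¹ • s, (0 : ℤ)) = (s, n) by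
    ext <;> norm_num [two_nsmul, ← add_smul]] at h

theorem apply_eq_of_snd_eq {y z : E × ℤ} (h : y.2 = z.2) : l y = l z := by
  obtain ⟨s, n⟩ := y
  obtain ⟨t, m⟩ := z
  obtain rfl : n = m := h
  rw [hl.apply_eq_apply_zero s, hl.apply_eq_apply_zero t]

theorem mul_apply_eq_one_of_snd_eq_neg {y z : E × ℤ} (h : z.2 = -y.2) : l y * l z = 1 := by
  rw [hl.apply_eq_of_snd_eq (z := -y) h, hl.apply_neg_eq_inv, mul_inv_cancel₀ (hl.ne_zero y)]

variable (h1 : l (0, 1) * l (0, 1) = 1)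
include h1

theorem apply_eq_zpow (y : E × ℤ) : l y = l (0, 1) ^ y.2 := by
  rw [hl.apply_eq_of_snd_eq (y := y) (z := (0, y.2)) rfl]
  exact eq_zpow_of_mul_apply_add_two (f := fun n ↦ l (0, n))
    (hl.apply_of_even 0 0 Even.zero) h1 hl.mul_apply_zero_add_two y.2

theorem map_add_eq_mul (y z : E × ℤ) : l (y + z) = l y * l z := by
  rw [hl.apply_eq_zpow h1, hl.apply_eq_zpow h1 y, hl.apply_eq_zpow h1 z, Prod.snd_add,
    zpow_add₀ (hl.ne_zero _)]

theorem continuous [TopologicalSpace E] : Continuous l := by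
  rw [funext (hl.apply_eq_zpow h1)]
  exact continuous_of_discreteTopology.comp continuous_snd

end IsNormalizedFactor

theorem IsNormalizedFactor.mul_self_apply_zero_one_of_cocycle [Module ℝ E] {l₁ l₂ : E × ℤ → ℂ}
    (h₁ : IsNormalizedFactor l₁) (h₂ : IsNormalizedFactor l₂) {ε : E × ℤ → E × ℤ}
    (hε : ∀ y, (ε y).2 = -y.2)
    (hcoc : ∀ u v, l₁ (u + v) * l₂ (u + ε v) = l₁ u * l₁ v * l₂ u * l₂ (ε v)) :
    l₁ (0, 1) * l₁ (0, 1) = 1 ∧ l₂ (0, 1) * l₂ (0, 1) = 1 := by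
  constructor
  · have h := hcoc (0, 1) (0, 1)
    have hl₂ := h₂.mul_apply_eq_one_of_snd_eq_neg (y := (0, 1)) (hε (0, 1))
    rw [h₁.apply_eq_one_of_even_snd (by norm_num),
      h₂.apply_eq_one_of_even_snd (by simp [hε])] at h
    linear_combination -h - l₁ (0, 1) * l₁ (0, 1) * hl₂
  · have h := hcoc (0, 1) (0, -1)
    have hl₁ := h₁.mul_apply_eq_one_of_snd_eq_neg (y := (0, 1)) (z := (0, -1)) rfl
    rw [h₁.apply_eq_one_of_even_snd (by norm_num), h₂.apply_eq_one_of_even_snd (by simp [hε]),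
      h₂.apply_eq_of_snd_eq (y := ε (0, -1)) (z := (0, 1)) (by simp [hε])] at h
    linear_combination -h - l₂ (0, 1) * l₂ (0, 1) * hl₁

end NormalizedFactor

/-- **Normalized factors are characters.**  Let `Y = ℝ^b × ℤ` and
`H = ℝ^b × 2ℤ = Y⁽²⁾`.  Suppose `l₁, l₂ : Y → ℂ` satisfy `|l j (y)| = 1`,
`l j (-y) = conj (l j y)`, `l j ≡ 1` on `H`, and `l j (u+v) l j (u−v) = 1` for all
`u ∈ H`, `v ∈ Y`.  Then `l j (s, n) = l j (0, n)` for all `s ∈ ℝ^b`, `n ∈ ℤ`; and if in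
addition `l₁(u+v) l₂(u+εv) = l₁(u) l₁(v) l₂(u) l₂(εv)` for all `u, v ∈ Y`, where
`ε(s, n) = (α s + n v₀, -n)` with `α ∈ Aut(ℝ^b)` and `v₀ ∈ ℝ^b`, then `l₁` and `l₂` are
(continuous) characters of the group `Y`. -/
theorem normalized_factors_are_characters
    (b : ℕ) (l₁ l₂ : (Fin b → ℝ) × ℤ → ℂ)
    (hmod₁ : ∀ y, ‖l₁ y‖ = 1) (hmod₂ : ∀ y, ‖l₂ y‖ = 1)
    (hconj₁ : ∀ y, l₁ (-y) = starRingEnd ℂ (l₁ y))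
    (hconj₂ : ∀ y, l₂ (-y) = starRingEnd ℂ (l₂ y))
    (hone₁ : ∀ s : Fin b → ℝ, ∀ n : ℤ, Even n → l₁ (s, n) = 1)
    (hone₂ : ∀ s : Fin b → ℝ, ∀ n : ℤ, Even n → l₂ (s, n) = 1)
    (hH₁ : ∀ u v : (Fin b → ℝ) × ℤ, Even u.2 → l₁ (u + v) * l₁ (u - v) = 1)
    (hH₂ : ∀ u v : (Fin b → ℝ) × ℤ, Even u.2 → l₂ (u + v) * l₂ (u - v) = 1)
    (α : (Fin b → ℝ) ≃ₗ[ℝ] (Fin b → ℝ)) (v₀ : Fin b → ℝ) :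
    ((∀ s : Fin b → ℝ, ∀ n : ℤ, l₁ (s, n) = l₁ (0, n)) ∧
      (∀ s : Fin b → ℝ, ∀ n : ℤ, l₂ (s, n) = l₂ (0, n))) ∧
    ((∀ u v : (Fin b → ℝ) × ℤ,
        l₁ (u + v) * l₂ (u + epsAut α v₀ v) =
          l₁ u * l₁ v * l₂ u * l₂ (epsAut α v₀ v)) →
      (Continuous l₁ ∧ ∀ y z : (Fin b → ℝ) × ℤ, l₁ (y + z) = l₁ y * l₁ z) ∧
      (Continuous l₂ ∧ ∀ y z : (Fin b → ℝ) × ℤ, l₂ (y + z) = l₂ y * l₂ z)) := by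
  have h₁ : IsNormalizedFactor l₁ := ⟨hmod₁, hconj₁, hone₁, hH₁⟩
  have h₂ : IsNormalizedFactor l₂ := ⟨hmod₂, hconj₂, hone₂, hH₂⟩
  refine ⟨⟨h₁.apply_eq_apply_zero, h₂.apply_eq_apply_zero⟩, fun hcoc ↦ ?_⟩
  obtain ⟨hsq₁, hsq₂⟩ := h₁.mul_self_apply_zero_one_of_cocycle h₂ (fun _ ↦ rfl) hcoc
  exact ⟨⟨h₁.continuous hsq₁, h₁.map_add_eq_mul hsq₁⟩,
    ⟨h₂.continuous hsq₂, h₂.map_add_eq_mul hsq₂⟩⟩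
end
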